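/- arXiv:2502.01694 — 6 statements merged into one kernel-verified Lean document; each statement's English description precedes it below -/
import Mathlib

section
/- For an irreducible, positive recurrent Markov chain X on a countable (or finite) state space S with unique stationary distribution π, the detailed balance equation for return times holds: for all states x, y, π(x)·P_x(τ̄_y < τ̄_x) = π(y)·P_y(τ̄_x < τ̄_y), where τ̄_z denotes the first return time to z (infimum of t > 0 with X_t = z). -/
/-!
Let `H = {x, y}`. Unrolling the stationarity equation `π z = ∑ w, π w p(w, z)` again and again
through the states outside `H` shows that, for the chain started from `π` restricted to `H`, the
expected number of visits to `z` at times `1, …, τ̄_H` is at most `π z`. For `z = x` this reads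
`π x P_x(τ̄_x < τ̄_y) + π y P_y(τ̄_x < τ̄_y) ≤ π x = π x (P_x(τ̄_x < τ̄_y) + P_x(τ̄_y < τ̄_x))`,
the last equality by recurrence of `x`. Cancelling gives one inequality; exchanging `x` and `y`
gives the other.
-/

open MeasureTheory
open scoped ENNReal

noncomputable section

/-- First return time of the trajectory `ω` to the set `A`:
`τ̄_A(ω) = inf {t > 0 : ω t ∈ A}`, valued in `ℕ∞` (it is `⊤` if the set is never revisited). -/
def returnTime {S : Type*} (A : Set S) (ω : ℕ → S) : ℕ∞ :=
  sInf ((fun n : ℕ => (n : ℕ∞)) '' {n : ℕ | 0 < n ∧ ω n ∈ A})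

namespace returnTime

variable {S : Type*} {A : Set S} {ω : ℕ → S}

theorem coe_lt_iff {m : ℕ} :
    (m : ℕ∞) < returnTime A ω ↔ ∀ i, 0 < i → i ≤ m → ω i ∉ A := by
  rw [← ENat.add_one_le_iff (ENat.natCast_ne_top m), returnTime, le_sInf_iff]
  constructor
  · intro h i hi him hiA
    have : ((m + 1 : ℕ) : ℕ∞) ≤ i := h _ ⟨i, ⟨hi, hiA⟩, rfl⟩
    norm_cast at this
    omega
  · rintro h _ ⟨i, ⟨hi, hiA⟩, rfl⟩
    by_contra! hlt
    norm_cast at hlt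
    exact h i hi (by omega) hiA

theorem le_coe {m : ℕ} (hm : 0 < m) (h : ω m ∈ A) : returnTime A ω ≤ m :=
  not_lt.1 fun hlt => coe_lt_iff.1 hlt m hm le_rfl h

theorem eq_top_iff : returnTime A ω = ⊤ ↔ ∀ i, 0 < i → ω i ∉ A := by
  rw [ENat.eq_top_iff_forall_gt]
  simp only [coe_lt_iff]
  exact ⟨fun h i hi => h i i hi le_rfl, fun h _ i hi _ => h i hi⟩

theorem pos : 0 < returnTime A ω := by
  exact_mod_cast coe_lt_iff (m := 0).2 fun i hi hi0 => absurd hi (by omega)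

theorem eq_coe_iff {m : ℕ} :
    returnTime A ω = m ↔ 0 < m ∧ ω m ∈ A ∧ ∀ i, 0 < i → i < m → ω i ∉ A := by
  constructor
  · intro h
    have hpos : 0 < m := by exact_mod_cast h ▸ pos
    have havoid : ∀ i, 0 < i → i < m → ω i ∉ A := fun i hi him =>
      coe_lt_iff.1 (h ▸ (by exact_mod_cast him)) i hi le_rfl
    refine ⟨hpos, ?_, havoid⟩
    by_contra hA
    have : (m : ℕ∞) < returnTime A ω := coe_lt_iff.2 fun i hi him =>
      (Nat.lt_or_eq_of_le him).elim (havoid i hi) fun him => him ▸ hA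
    exact this.ne h.symm
  · rintro ⟨hpos, hmA, havoid⟩
    refine le_antisymm (le_coe hpos hmA) ?_
    rw [← Nat.sub_add_cancel hpos, Nat.cast_add, Nat.cast_one,
      ENat.add_one_le_iff (ENat.natCast_ne_top _)]
    exact coe_lt_iff.2 fun i hi him => havoid i hi (by omega)

theorem lt_or_lt {x y : S} (hxy : x ≠ y) (h : returnTime {x} ω ≠ ⊤) :
    returnTime {x} ω < returnTime {y} ω ∨ returnTime {y} ω < returnTime {x} ω := by
  refine lt_or_gt_of_ne fun heq => ?_
  obtain ⟨m, hm⟩ := ENat.ne_top_iff_exists.1 h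
  obtain ⟨-, hmx, -⟩ := eq_coe_iff.1 hm.symm
  obtain ⟨-, hmy, -⟩ := eq_coe_iff.1 (heq ▸ hm.symm)
  exact hxy (hmx.symm.trans hmy)

end returnTime

section Taboo

variable {S : Type*}

def tabooSet (H : Finset S) (m : ℕ) (z : S) : Set (ℕ → S) :=
  {ω | (∀ i, 0 < i → i < m → ω i ∉ H) ∧ ω m = z}

theorem pairwise_disjoint_tabooSet {H : Finset S} {z : S} (hz : z ∈ H) :
    Pairwise (Function.onFun Disjoint fun k => tabooSet H (k + 1) z) := by
  refine (pairwise_disjoint_on _).2 fun k l hkl => Set.disjoint_left.2 ?_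
  rintro ω ⟨-, hωk⟩ ⟨hω, -⟩
  exact hω (k + 1) k.succ_pos (by omega) (hωk ▸ hz)

variable [DecidableEq S]

theorem setOf_returnTime_lt_eq_iUnion {x y : S} (hxy : x ≠ y) :
    {ω : ℕ → S | returnTime {y} ω < returnTime {x} ω} = ⋃ k : ℕ, tabooSet {x, y} (k + 1) y := by
  ext ω
  simp only [Set.mem_ofPred_eq, Set.mem_iUnion, tabooSet, Finset.mem_insert,
    Finset.mem_singleton, not_or]
  constructor
  · intro h
    obtain ⟨m, hm⟩ := ENat.ne_top_iff_exists.1 (h.trans_le le_top).ne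
    obtain ⟨hpos, hmy, havoid⟩ := returnTime.eq_coe_iff.1 hm.symm
    refine ⟨m - 1, fun i hi him => ⟨fun hix => ?_, havoid i hi (by omega)⟩, by
      rw [Nat.sub_add_cancel hpos]; exact hmy⟩
    have : (m : ℕ∞) < i := (hm ▸ h).trans_le (returnTime.le_coe hi hix)
    norm_cast at this
    omega
  · rintro ⟨k, havoid, hky⟩
    refine (returnTime.le_coe k.succ_pos hky).trans_lt (returnTime.coe_lt_iff.2 ?_)
    intro i hi hik hix
    rcases Nat.lt_or_eq_of_le hik with hik | rfl
    · exact (havoid i hi hik).1 hix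
    · exact hxy (hix.symm.trans hky)

variable [Fintype S]

/-- `tabooPow q H k s z` is the taboo transition weight `_H q^(k+1) (s, z)`: the total `q`-weight
of the paths of length `k + 1` from `s` to `z` whose intermediate states all avoid `H`. -/
def tabooPow (q : S → S → ℝ≥0∞) (H : Finset S) : ℕ → S → S → ℝ≥0∞
  | 0 => q
  | k + 1 => fun s z => ∑ w ∈ Hᶜ, tabooPow q H k s w * q w z

theorem sum_mul_tsum_tabooPow_le {q : S → S → ℝ≥0∞} {μ : S → ℝ≥0∞}
    (hμ : ∀ z, ∑ w, μ w * q w z ≤ μ z) (H : Finset S) (z : S) :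
    ∑ h ∈ H, μ h * ∑' k, tabooPow q H k h z ≤ μ z := by
  set ρ : ℕ → S → ℝ≥0∞ := fun k z => ∑ h ∈ H, μ h * tabooPow q H k h z
  have hρ : ∀ k z, ρ (k + 1) z = ∑ w ∈ Hᶜ, ρ k w * q w z := fun k z => by
    simp only [ρ, tabooPow, Finset.mul_sum, Finset.sum_mul, mul_assoc]
    exact Finset.sum_comm
  have hpartial : ∀ n z, ∑ k ∈ Finset.range n, ρ k z ≤ μ z := by
    intro n
    induction n with
    | zero => simp
    | succ n ih =>
      intro z
      calc ∑ k ∈ Finset.range (n + 1), ρ k z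
          = ∑ w ∈ Hᶜ, (∑ k ∈ Finset.range n, ρ k w) * q w z + ∑ h ∈ H, μ h * q h z := by
            simp only [Finset.sum_range_succ', hρ, Finset.sum_mul]
            rw [Finset.sum_comm]
            rfl
        _ ≤ ∑ w ∈ Hᶜ, μ w * q w z + ∑ h ∈ H, μ h * q h z := by gcongr with w; exact ih w
        _ = ∑ w, μ w * q w z := by rw [add_comm, Finset.sum_add_sum_compl]
        _ ≤ μ z := hμ z
  calc ∑ h ∈ H, μ h * ∑' k, tabooPow q H k h z = ∑' k, ρ k z := by
        simp only [ρ, ← ENNReal.tsum_mul_left]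
        exact (Summable.tsum_finsetSum fun _ _ => ENNReal.summable).symm
    _ ≤ μ z := ENNReal.tsum_le_of_sum_range_le fun n => hpartial n z

end Taboo

theorem preimage_comp_eq_of_forall_preimage_eq {ι S : Type*} [MeasurableSpace S] {σ : S → S}
    (hσ : ∀ E, MeasurableSet E → σ ⁻¹' E = E) {t : Set (ι → S)} (ht : MeasurableSet t) :
    (fun ω i => σ (ω i)) ⁻¹' t = t := by
  have hle : MeasurableSpace.pi ≤ MeasurableSpace.invariants fun (ω : ι → S) i => σ (ω i) :=
    iSup_le fun i => MeasurableSpace.comap_le_iff_le_map.2 fun E hE =>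
      MeasurableSpace.measurableSet_invariants.2
        ⟨measurable_pi_apply i hE, congrArg (fun E => (fun ω : ι → S => ω i) ⁻¹' E) (hσ E hE)⟩
  exact (MeasurableSpace.measurableSet_invariants.1 (hle t ht)).2

section PathSpace

variable {S : Type*} [MeasurableSpace S]

theorem measurableSet_tabooSet [MeasurableSingletonClass S] (H : Finset S) (m : ℕ) (z : S) :
    MeasurableSet (tabooSet H m z) := by
  unfold tabooSet
  measurability

theorem measurableSet_setOf_returnTime_lt [DecidableEq S] [MeasurableSingletonClass S] {x y : S}
    (hxy : x ≠ y) : MeasurableSet {ω : ℕ → S | returnTime {y} ω < returnTime {x} ω} :=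
  setOf_returnTime_lt_eq_iUnion hxy ▸ MeasurableSet.iUnion fun _ => measurableSet_tabooSet _ _ _

theorem measure_returnTime_eq_top {A : Set S} (hA : MeasurableSet A) {μ : Measure (ℕ → S)}
    (h : ∫⁻ ω, (returnTime A ω : ℝ≥0∞) ∂μ < ⊤) : μ {ω | returnTime A ω = ⊤} = 0 := by
  have hN : MeasurableSet {ω : ℕ → S | returnTime A ω = ⊤} := by
    simp only [returnTime.eq_top_iff]
    measurability
  by_contra hne
  have hle : ∫⁻ ω, {ω | returnTime A ω = ⊤}.indicator (fun _ => ⊤) ω ∂μ ≤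
      ∫⁻ ω, (returnTime A ω : ℝ≥0∞) ∂μ := by
    refine lintegral_mono fun ω => ?_
    by_cases hω : returnTime A ω = ⊤ <;> simp [hω]
  rw [lintegral_indicator_const hN, ENNReal.top_mul hne] at hle
  exact (hle.trans_lt h).ne rfl

end PathSpace

section MarkovChain

variable {S : Type*} [DecidableEq S] [MeasurableSpace S]

def IsMarkovChainLaw (p : S → S → ℝ) (P : S → Measure (ℕ → S)) : Prop :=
  ∀ (x : S) (γ : ℕ → S) (n : ℕ), P x {ω | ∀ i ≤ n, ω i = γ i} =
    if γ 0 = x then ENNReal.ofReal (∏ i ∈ Finset.range n, p (γ i) (γ (i + 1))) else 0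

namespace IsMarkovChainLaw

variable {p : S → S → ℝ} {P : S → Measure (ℕ → S)} (hP : IsMarkovChainLaw p P)
include hP

theorem measure_start (s z : S) : P s {ω | ω 0 = z} = if z = s then 1 else 0 := by
  simpa using hP s (fun _ => z) 0

/-- If `a ≠ b` were not separated, swapping them would fix every measurable set of paths, although
`P b` gives mass `1` to `{ω 0 = b}` and `0` to `{ω 0 = a}`. -/
theorem separatesPoints : MeasurableSpace.SeparatesPoints S := by
  refine ⟨fun a b hab => by_contra fun hne => ?_⟩
  have hswap : ∀ E, MeasurableSet E → Equiv.swap a b ⁻¹' E = E := by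
    intro E hE
    ext c
    rcases eq_or_ne c a with rfl | hca
    · simpa using (Iff.intro (hab E hE) (not_imp_not.1 (hab Eᶜ hE.compl))).symm
    rcases eq_or_ne c b with rfl | hcb
    · simpa using Iff.intro (hab E hE) (not_imp_not.1 (hab Eᶜ hE.compl))
    · simp [Equiv.swap_apply_of_ne_of_ne hca hcb]
  obtain ⟨t, hat, ht, ht0⟩ := exists_measurable_superset_of_null
    ((hP.measure_start b a).trans (if_neg hne))
  have hbt : {ω : ℕ → S | ω 0 = b} ⊆ t := fun ω hω => by
    rw [← preimage_comp_eq_of_forall_preimage_eq hswap ht]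
    exact hat (show Equiv.swap a b (ω 0) = a by rw [hω, Equiv.swap_apply_right])
  have := (measure_mono (μ := P b) hbt).trans_eq ht0
  simp [hP.measure_start] at this

theorem measure_cylinder_inter (hp0 : ∀ a b, 0 ≤ p a b) (s : S) (γ : ℕ → S) (n : ℕ) (z : S) :
    P s ({ω | ∀ i ≤ n, ω i = γ i} ∩ {ω | ω (n + 1) = z}) =
      P s {ω | ∀ i ≤ n, ω i = γ i} * ENNReal.ofReal (p (γ n) z) := by
  obtain ⟨γ', hγ', hγ'z⟩ : ∃ γ' : ℕ → S, (∀ i ≤ n, γ' i = γ i) ∧ γ' (n + 1) = z :=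
    ⟨Function.update γ (n + 1) z, fun i hi => Function.update_of_ne (by omega) _ _,
      Function.update_self ..⟩
  have hcyl : {ω : ℕ → S | ∀ i ≤ n, ω i = γ i} ∩ {ω | ω (n + 1) = z} =
      {ω | ∀ i ≤ n + 1, ω i = γ' i} := by
    ext ω
    simp only [Set.mem_inter_iff, Set.mem_ofPred_eq, Nat.le_succ_iff, or_imp, forall_and,
      forall_eq, hγ'z]
    exact and_congr_left' (forall₂_congr fun i hi => by rw [hγ' i hi])
  rw [hcyl, hP, hP, Finset.prod_range_succ, hγ' 0 n.zero_le, hγ' n le_rfl, hγ'z,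
    Finset.prod_congr rfl fun i hi => by
      rw [hγ' i (by simp at hi; omega), hγ' (i + 1) (by simp at hi; omega)]]
  split_ifs
  · exact ENNReal.ofReal_mul (Finset.prod_nonneg fun _ _ => hp0 _ _)
  · simp

theorem measurableSingletonClass [Finite S] : MeasurableSingletonClass S :=
  have := hP.separatesPoints
  MeasurableSpace.measurableSingletonClass_of_countablySeparated

variable [MeasurableSingletonClass S]

theorem isProbabilityMeasure [Fintype S] (s : S) : IsProbabilityMeasure (P s) := by
  constructor
  have := sum_measure_preimage_singleton (μ := P s) Finset.univ (f := fun ω : ℕ → S => ω 0)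
    fun z _ => measurable_pi_apply 0 (measurableSet_singleton z)
  simpa [Set.preimage, hP.measure_start] using this.symm

theorem measure_inter_eq_mul [Finite S] (hp0 : ∀ a b, 0 ≤ p a b) {F : Set (ℕ → S)} {n : ℕ}
    {w : S} (hF : ∀ ω ∈ F, ∀ ω', (∀ i ≤ n, ω' i = ω i) → ω' ∈ F) (hFw : ∀ ω ∈ F, ω n = w)
    (s z : S) : P s (F ∩ {ω | ω (n + 1) = z}) = P s F * ENNReal.ofReal (p w z) := by
  set r := Preorder.frestrictLe (π := fun _ : ℕ => S) n
  have hfiber : ∀ ω, r ⁻¹' {r ω} = {ω' | ∀ i ≤ n, ω' i = ω i} := fun ω => by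
    ext ω'
    simp [r, funext_iff]
  have hFr : r ⁻¹' (r '' F) = F := by
    refine Set.Subset.antisymm ?_ (Set.subset_preimage_image r F)
    rintro ω' ⟨ω, hω, hr⟩
    have : ω' ∈ r ⁻¹' {r ω} := hr.symm
    exact hF ω hω ω' (by rwa [hfiber] at this)
  have hmeas : ∀ b, MeasurableSet (r ⁻¹' {b}) := fun b =>
    Preorder.measurable_frestrictLe n (measurableSet_singleton b)
  have hX : MeasurableSet {ω : ℕ → S | ω (n + 1) = z} :=
    measurableSet_eq_fun (measurable_pi_apply _) measurable_const
  calc P s (F ∩ {ω | ω (n + 1) = z})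
      = (P s).restrict {ω | ω (n + 1) = z} (r ⁻¹' (r '' F)) := by
        rw [hFr, Measure.restrict_apply' hX]
    _ = ∑' b : r '' F, (P s).restrict {ω | ω (n + 1) = z} (r ⁻¹' {↑b}) :=
        (tsum_measure_preimage_singleton (Set.to_countable _) fun b _ => hmeas b).symm
    _ = ∑' b : r '' F, P s (r ⁻¹' {↑b}) * ENNReal.ofReal (p w z) :=
        tsum_congr fun b => by
          obtain ⟨ω, hω, hb⟩ := b.2
          rw [← hb, Measure.restrict_apply' hX, hfiber, hP.measure_cylinder_inter hp0, hFw ω hω]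
    _ = P s F * ENNReal.ofReal (p w z) := by
        rw [ENNReal.tsum_mul_right,
          tsum_measure_preimage_singleton (Set.to_countable _) fun b _ => hmeas b, hFr]

theorem measure_tabooSet [Fintype S] (hp0 : ∀ a b, 0 ≤ p a b) (H : Finset S) (k : ℕ) (s z : S) :
    P s (tabooSet H (k + 1) z) = tabooPow (fun a b => ENNReal.ofReal (p a b)) H k s z := by
  induction k generalizing z with
  | zero =>
    have hstart : P s {ω | ω 0 = s} = 1 := by simp [hP.measure_start]
    have := hP.isProbabilityMeasure s
    have hstep := hP.measure_inter_eq_mul hp0 (F := {ω | ω 0 = s}) (n := 0)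
      (fun ω hω ω' h => (h 0 le_rfl).trans hω) (fun ω hω => hω) s z
    rw [hstart, one_mul, Set.inter_comm, measure_inter_conull ((prob_compl_eq_zero_iff
      (measurableSet_eq_fun (measurable_pi_apply _) measurable_const)).2 hstart)] at hstep
    have hset : tabooSet H 1 z = {ω | ω 1 = z} := by
      ext ω
      simp only [tabooSet, Set.mem_ofPred_eq, and_iff_right_iff_imp]
      intro _ i hi hi1
      omega
    rw [hset, hstep]
    rfl
  | succ k ih =>
    have hunion : tabooSet H (k + 1 + 1) z =
        ⋃ w ∈ Hᶜ, (tabooSet H (k + 1) w ∩ {ω | ω (k + 1 + 1) = z}) := by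
      ext ω
      simp only [tabooSet, Set.mem_ofPred_eq, Set.mem_iUnion, Set.mem_inter_iff,
        Finset.mem_compl, exists_prop]
      constructor
      · rintro ⟨havoid, hz⟩
        exact ⟨ω (k + 1), havoid (k + 1) k.succ_pos (by omega),
          ⟨fun i hi hik => havoid i hi (by omega), rfl⟩, hz⟩
      · rintro ⟨_, hk, ⟨havoid, rfl⟩, hz⟩
        refine ⟨fun i hi hik => ?_, hz⟩
        rcases Nat.lt_or_eq_of_le (Nat.le_of_lt_succ hik) with hik | rfl
        · exact havoid i hi hik
        · exact hk
    rw [hunion, measure_biUnion_finset]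
    · refine Finset.sum_congr rfl fun w _ => ?_
      rw [hP.measure_inter_eq_mul hp0 (F := tabooSet H (k + 1) w)
        (fun ω hω ω' h => ⟨fun i hi him => h i him.le ▸ hω.1 i hi him, (h _ le_rfl).trans hω.2⟩)
        (fun ω hω => hω.2), ih]
    · exact fun w _ w' _ hne => Set.disjoint_left.2 fun ω h h' => hne (h.1.2.symm.trans h'.1.2)
    · exact fun w _ => (measurableSet_tabooSet H _ w).inter
        (measurableSet_eq_fun (measurable_pi_apply _) measurable_const)

theorem measure_returnTime_lt_add_measure_returnTime_lt [Fintype S] {x y : S} (hxy : x ≠ y)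
    (hrec : P x {ω | returnTime {x} ω = ⊤} = 0) :
    P x {ω | returnTime {x} ω < returnTime {y} ω} +
      P x {ω | returnTime {y} ω < returnTime {x} ω} = 1 := by
  have := hP.isProbabilityMeasure x
  have hdisj : Disjoint {ω : ℕ → S | returnTime {x} ω < returnTime {y} ω}
      {ω | returnTime {y} ω < returnTime {x} ω} :=
    Set.disjoint_left.2 fun _ h h' => lt_asymm (Set.mem_ofPred.1 h) h'
  rw [← measure_union hdisj (measurableSet_setOf_returnTime_lt hxy), ← prob_compl_eq_zero_iff
    ((measurableSet_setOf_returnTime_lt hxy.symm).union (measurableSet_setOf_returnTime_lt hxy))]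
  refine measure_mono_null (fun ω hω => ?_) hrec
  by_contra htop
  exact hω (returnTime.lt_or_lt hxy htop)

variable [Fintype S] (hp0 : ∀ a b, 0 ≤ p a b)
include hp0

theorem measure_setOf_returnTime_lt {x y : S} (hxy : x ≠ y) (s : S) :
    P s {ω | returnTime {y} ω < returnTime {x} ω} =
      ∑' k, tabooPow (fun a b => ENNReal.ofReal (p a b)) {x, y} k s y := by
  rw [setOf_returnTime_lt_eq_iUnion hxy, measure_iUnion (pairwise_disjoint_tabooSet (by simp))
    fun k => measurableSet_tabooSet _ _ _]
  exact tsum_congr fun k => hP.measure_tabooSet hp0 _ k s y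

theorem mul_measure_returnTime_lt_le {π : S → ℝ} (hπ0 : ∀ x, 0 ≤ π x)
    (hstat : ∀ z, ∑ w, π w * p w z ≤ π z) {x y : S} (hxy : x ≠ y)
    (hrec : P x {ω | returnTime {x} ω = ⊤} = 0) :
    ENNReal.ofReal (π y) * P y {ω | returnTime {x} ω < returnTime {y} ω} ≤
      ENNReal.ofReal (π x) * P x {ω | returnTime {y} ω < returnTime {x} ω} := by
  have := hP.isProbabilityMeasure x
  have hexcessive :
      ∀ z, ∑ w, ENNReal.ofReal (π w) * ENNReal.ofReal (p w z) ≤ ENNReal.ofReal (π z) :=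
    fun z => calc
      _ = ENNReal.ofReal (∑ w, π w * p w z) := by
        rw [ENNReal.ofReal_sum_of_nonneg fun w _ => mul_nonneg (hπ0 w) (hp0 w z)]
        simp_rw [ENNReal.ofReal_mul (hπ0 _)]
      _ ≤ _ := ENNReal.ofReal_le_ofReal (hstat z)
  have hexit := sum_mul_tsum_tabooPow_le hexcessive {x, y} x
  rw [Finset.sum_pair hxy, Finset.pair_comm, ← hP.measure_setOf_returnTime_lt hp0 hxy.symm,
    ← hP.measure_setOf_returnTime_lt hp0 hxy.symm] at hexit
  have hsplit := hP.measure_returnTime_lt_add_measure_returnTime_lt hxy hrec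
  refine (ENNReal.add_le_add_iff_left ?_).1 (hexit.trans_eq ?_)
  · exact ENNReal.mul_ne_top ENNReal.ofReal_ne_top (measure_ne_top _ _)
  · rw [← mul_add, hsplit, mul_one]

end IsMarkovChainLaw

end MarkovChain

theorem detailed_balance_return_times_general
    {S : Type*} [Fintype S] [DecidableEq S] [MeasurableSpace S]
    (p : S → S → ℝ) (hp0 : ∀ x y, 0 ≤ p x y)
    (P : S → Measure (ℕ → S))
    (hcyl : ∀ (x : S) (γ : ℕ → S) (n : ℕ),
      P x {ω | ∀ i ≤ n, ω i = γ i} =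
        if γ 0 = x then ENNReal.ofReal (∏ i ∈ Finset.range n, p (γ i) (γ (i+1))) else 0)
    (hrec : ∀ x : S, ∫⁻ ω, (returnTime {x} ω : ℝ≥0∞) ∂ P x < ⊤)
    (π : S → ℝ) (hπ0 : ∀ x, 0 ≤ π x)
    (hstat : ∀ y, ∑ x, π x * p x y = π y) :
    ∀ x y : S,
      ENNReal.ofReal (π x) * P x {ω | returnTime {y} ω < returnTime {x} ω} =
      ENNReal.ofReal (π y) * P y {ω | returnTime {x} ω < returnTime {y} ω} := by
  intro x y
  rcases eq_or_ne x y with rfl | hxy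
  · rfl
  have hP : IsMarkovChainLaw p P := hcyl
  have := hP.measurableSingletonClass
  have hrecurrent : ∀ z, P z {ω | returnTime {z} ω = ⊤} = 0 := fun z =>
    measure_returnTime_eq_top (measurableSet_singleton z) (hrec z)
  have hexcessive : ∀ z, ∑ w, π w * p w z ≤ π z := fun z => (hstat z).le
  exact le_antisymm (hP.mul_measure_returnTime_lt_le hp0 hπ0 hexcessive hxy.symm (hrecurrent y))
    (hP.mul_measure_returnTime_lt_le hp0 hπ0 hexcessive hxy (hrecurrent x))

/-- **Detailed balance of escape probabilities.** For an irreducible, positive recurrent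
Markov chain on a finite state space `S` with transition kernel `p` and stationary
distribution `π`, for all states `x, y`:
`π(x)·P_x(τ̄_y < τ̄_x) = π(y)·P_y(τ̄_x < τ̄_y)`.
The chain is encoded by its family of path measures `P x` on `ℕ → S` (start at `x`),
determined on cylinder sets by the kernel `p`. -/
theorem detailed_balance_return_times
    {S : Type*} [Fintype S] [DecidableEq S] [Nonempty S] [MeasurableSpace S]
    (p : S → S → ℝ) (hp0 : ∀ x y, 0 ≤ p x y) (hp1 : ∀ x, ∑ y, p x y = 1)
    (P : S → Measure (ℕ → S)) (hP : ∀ x, IsProbabilityMeasure (P x))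
    (hcyl : ∀ (x : S) (γ : ℕ → S) (n : ℕ),
      P x {ω | ∀ i ≤ n, ω i = γ i} =
        if γ 0 = x then ENNReal.ofReal (∏ i ∈ Finset.range n, p (γ i) (γ (i+1))) else 0)
    (hirr : ∀ x y : S, ∃ n : ℕ, 0 < P x {ω | ω n = y})
    (hrec : ∀ x : S, ∫⁻ ω, (returnTime {x} ω : ℝ≥0∞) ∂ P x < ⊤)
    (π : S → ℝ) (hπ0 : ∀ x, 0 ≤ π x) (hπ1 : ∑ x, π x = 1)
    (hstat : ∀ y, ∑ x, π x * p x y = π y) :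
    ∀ x y : S,
      ENNReal.ofReal (π x) * P x {ω | returnTime {y} ω < returnTime {x} ω} =
      ENNReal.ofReal (π y) * P y {ω | returnTime {x} ω < returnTime {y} ω} :=
  detailed_balance_return_times_general p hp0 P hcyl hrec π hπ0 hstat
end
end

section
/- (Gilbert–Varshamov bound) The maximum size A_q(K,d) of a code of length K over an alphabet of size q with minimum Hamming distance d satisfies A_q(K,d) ≥ q^K / Vol_q(K, d−1), where Vol_q(K,d) = ∑_{i=0}^d C(K,i)(q−1)^i is the volume of the Hamming ball of radius d. -/
open scoped BigOperators
open Finset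

lemma gv_sphere_card_le (q K i : ℕ) (u : Fin K → Fin q) :
    (Finset.univ.filter (fun v : Fin K → Fin q => hammingDist u v = i)).card
      ≤ K.choose i * (q - 1) ^ i := by
  classical
  rw [← Fintype.card_subtype]
  set T := Σ s : {s : Finset (Fin K) // s.card = i},
      ∀ j : {j // j ∈ s.1}, {x : Fin q // x ≠ u j.1} with hT
  let f : {v : Fin K → Fin q // hammingDist u v = i} → T := fun v =>
    ⟨⟨Finset.univ.filter (fun j => v.1 j ≠ u j), by
        simpa [hammingDist, ne_comm] using v.2⟩,
      fun j => ⟨v.1 j.1, (Finset.mem_filter.mp j.2).2⟩⟩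
  let G : T → (Fin K → Fin q) := fun p j =>
    if h : j ∈ p.1.1 then (p.2 ⟨j, h⟩).1 else u j
  have key : ∀ v, G (f v) = v.1 := by
    intro v
    funext j
    by_cases h : v.1 j ≠ u j
    · simp [G, f, h]
    · push_neg at h
      simp [G, f, h]
  have hinj : Function.Injective f := by
    intro v w h
    exact Subtype.ext (by rw [← key v, ← key w, h])
  refine (Fintype.card_le_of_injective f hinj).trans_eq ?_
  rw [Fintype.card_sigma]
  have hfiber : ∀ s : {s : Finset (Fin K) // s.card = i},
      Fintype.card (∀ j : {j // j ∈ s.1}, {x : Fin q // x ≠ u j.1}) = (q - 1) ^ i := by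
    intro s
    rw [Fintype.card_pi]
    have hc : ∀ j : {j // j ∈ s.1}, Fintype.card {x : Fin q // x ≠ u j.1} = q - 1 := by
      intro j
      have := Fintype.card_subtype_compl (fun x : Fin q => x = u j.1)
      simpa [Fintype.card_subtype_eq] using this
    simp only [hc]
    rw [Finset.prod_const]
    congr 1
    simpa using s.2
  simp only [hfiber, Finset.sum_const, Finset.card_univ, smul_eq_mul,
    Fintype.card_finset_len, Fintype.card_fin]

lemma gv_ball_card_le (q K d : ℕ) (u : Fin K → Fin q) :
    (Finset.univ.filter (fun v : Fin K → Fin q => hammingDist u v < d)).card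
      ≤ ∑ i ∈ Finset.range d, K.choose i * (q - 1) ^ i := by
  classical
  have hset : (Finset.univ.filter (fun v : Fin K → Fin q => hammingDist u v < d))
      = (Finset.range d).biUnion
        (fun i => Finset.univ.filter (fun v : Fin K → Fin q => hammingDist u v = i)) := by
    ext v
    simp only [Finset.mem_filter, Finset.mem_biUnion, Finset.mem_range, Finset.mem_univ,
      true_and]
    constructor
    · intro h; exact ⟨_, h, rfl⟩
    · rintro ⟨i, hi, rfl⟩; exact hi
  rw [hset]
  exact Finset.card_biUnion_le.trans
    (Finset.sum_le_sum fun i _ => gv_sphere_card_le q K i u)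

/-- **Gilbert–Varshamov bound.** There exists a code of length `K` over an alphabet of
size `q` with minimum Hamming distance at least `d` and size at least
`q^K / Vol_q(K, d−1)`, where `Vol_q(K, r) = ∑_{i=0}^{r} C(K,i)(q−1)^i` is the volume of
the Hamming ball of radius `r`.  (Hence `A_q(K,d) ≥ q^K / Vol_q(K, d−1)`.) -/
theorem gilbert_varshamov_bound (q K d : ℕ) (hq : 1 ≤ q) :
    ∃ C : Finset (Fin K → Fin q),
      (∀ u ∈ C, ∀ v ∈ C, u ≠ v → d ≤ hammingDist u v) ∧
      (q : ℝ) ^ K / (∑ i ∈ Finset.range d, (K.choose i : ℝ) * ((q : ℝ) - 1) ^ i) ≤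
        C.card := by
  classical
  rcases Nat.eq_zero_or_pos d with rfl | hd
  · exact ⟨∅, by simp, by simp⟩
  -- the family of valid codes
  set P : Finset (Fin K → Fin q) → Prop :=
    fun C => ∀ u ∈ C, ∀ v ∈ C, u ≠ v → d ≤ hammingDist u v with hP
  set 𝒞 : Finset (Finset (Fin K → Fin q)) := Finset.univ.filter P with h𝒞
  have hne : 𝒞.Nonempty := ⟨∅, by simp [h𝒞, hP]⟩
  obtain ⟨C, hC𝒞, hmax⟩ := Finset.exists_max_image 𝒞 Finset.card hne
  have hCP : P C := (Finset.mem_filter.mp hC𝒞).2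
  refine ⟨C, hCP, ?_⟩
  -- covering property
  have hcov : ∀ x : Fin K → Fin q, ∃ u ∈ C, hammingDist u x < d := by
    intro x
    by_cases hx : x ∈ C
    · exact ⟨x, hx, by simpa using hd⟩
    · by_contra hcon
      push_neg at hcon
      have hins : P (insert x C) := by
        intro u hu v hv huv
        rcases Finset.mem_insert.mp hu with hux | hu
        · rcases Finset.mem_insert.mp hv with hvx | hv
          · exact absurd (hux.trans hvx.symm) huv
          · have := hcon v hv
            rw [hammingDist_comm, ← hux] at this
            exact this
        · rcases Finset.mem_insert.mp hv with hvx | hv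
          · have := hcon u hu
            rw [← hvx] at this
            exact this
          · exact hCP u hu v hv huv
      have hmem : insert x C ∈ 𝒞 := Finset.mem_filter.mpr ⟨Finset.mem_univ _, hins⟩
      have := hmax _ hmem
      rw [Finset.card_insert_of_notMem hx] at this
      omega
  -- counting
  have hunion : (Finset.univ : Finset (Fin K → Fin q)) ⊆
      C.biUnion (fun u => Finset.univ.filter (fun v => hammingDist u v < d)) := by
    intro x _
    obtain ⟨u, hu, hux⟩ := hcov x
    exact Finset.mem_biUnion.mpr ⟨u, hu, by simp [hux]⟩
  have hcount : q ^ K ≤ C.card * ∑ i ∈ Finset.range d, K.choose i * (q - 1) ^ i := by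
    calc q ^ K = (Finset.univ : Finset (Fin K → Fin q)).card := by
          simp [Finset.card_univ]
      _ ≤ (C.biUnion (fun u => Finset.univ.filter (fun v => hammingDist u v < d))).card :=
          Finset.card_le_card hunion
      _ ≤ ∑ u ∈ C, (Finset.univ.filter (fun v => hammingDist u v < d)).card :=
          Finset.card_biUnion_le
      _ ≤ ∑ _u ∈ C, ∑ i ∈ Finset.range d, K.choose i * (q - 1) ^ i :=
          Finset.sum_le_sum fun u _ => gv_ball_card_le q K d u
      _ = C.card * ∑ i ∈ Finset.range d, K.choose i * (q - 1) ^ i := by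
          rw [Finset.sum_const, smul_eq_mul]
  -- pass to ℝ
  set V : ℝ := ∑ i ∈ Finset.range d, (K.choose i : ℝ) * ((q : ℝ) - 1) ^ i with hV
  have hVpos : 0 < V := by
    have h0 : (1 : ℝ) ≤ V := by
      have : ∀ i ∈ Finset.range d, (0 : ℝ) ≤ (K.choose i : ℝ) * ((q : ℝ) - 1) ^ i := by
        intro i _
        have hq1 : (0 : ℝ) ≤ (q : ℝ) - 1 := by
          have : (1 : ℝ) ≤ (q : ℝ) := by exact_mod_cast hq
          linarith
        positivity
      have := Finset.single_le_sum this (by simpa using hd : 0 ∈ Finset.range d)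
      simpa using this
    linarith
  rw [div_le_iff₀ hVpos]
  have hcast : ((∑ i ∈ Finset.range d, K.choose i * (q - 1) ^ i : ℕ) : ℝ) = V := by
    rw [hV]
    push_cast [Nat.cast_sub hq]
    ring_nf
  calc (q : ℝ) ^ K = ((q ^ K : ℕ) : ℝ) := by push_cast; ring
    _ ≤ ((C.card * ∑ i ∈ Finset.range d, K.choose i * (q - 1) ^ i : ℕ) : ℝ) := by
        exact_mod_cast hcount
    _ = C.card * V := by rw [Nat.cast_mul, hcast]
end

section
/- For every constant C > 0 and τ = 1 − log(q)/(Cq), the q-ary entropy satisfies H_q(τ) ≤ 1 − log(log q)/(2Cq) for all sufficiently large q, and consequently the Gilbert–Varshamov bound gives A_q(K, τK) ≥ q^{K·log(log q)/(2Cq)}. -/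
open scoped BigOperators

/-- The `q`-ary entropy function
`H_q(τ) = τ·log_q(q−1) − τ·log_q τ − (1−τ)·log_q(1−τ)`. -/
noncomputable def qaryEntropy (q : ℕ) (τ : ℝ) : ℝ :=
  τ * Real.logb q ((q : ℝ) - 1) - τ * Real.logb q τ - (1 - τ) * Real.logb q (1 - τ)

/-! With `ε = log q/(Cq)`, the entropy `H_q(1 - ε)` is at most `1 - ε + ε(1 - log ε)/log q`
(bound `log(q-1) ≤ log q` and `-(1-ε) log(1-ε) ≤ ε`), and `log ε = log log q - log C - log q`
turns the excess over `1` into `(1 + log C - log log q)/(Cq) ≤ -log log q/(2Cq)` as soon as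
`log log q ≥ 2(log C + 1)`.

For the codes, let `r = ⌊(1 - ε)K⌋`. A maximal code of minimum distance `> r` is an `r`-covering,
and a word within distance `r` of a codeword `c` agrees with `c` on some `K - r` coordinates, so
`q^(K-r) ≤ |Code| · C(K, K-r) ≤ |Code| · (eK/(K-r))^(K-r)`. Since `K - r ≥ εK`, this yields
`|Code| ≥ (qε/e)^(εK) = (log q/(Ce))^(εK)`, and `log (log q/(Ce)) ≥ log log q / 2`. -/

open Finset Filter
-- Mathlib's `Real.qaryEntropy` is a natural-logarithm variant of `qaryEntropy`.
open Real hiding qaryEntropy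

section HammingCode

variable {ι α : Type*} [Fintype ι] [DecidableEq α]

lemma card_filter_forall_mem_eq [DecidableEq ι] [Fintype α] (S : Finset ι) (c : ι → α) :
    #{w : ι → α | ∀ i ∈ S, w i = c i} = Fintype.card α ^ (Fintype.card ι - #S) := by
  have hpi : ({w : ι → α | ∀ i ∈ S, w i = c i} : Finset (ι → α)) =
      Fintype.piFinset fun i => if i ∈ S then {c i} else univ := by
    ext w
    simp only [mem_filter, mem_univ, true_and, Fintype.mem_piFinset]
    refine forall_congr' fun i => ?_
    split_ifs with hi <;> simp [hi]
  rw [hpi, Fintype.card_piFinset]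
  simp only [apply_ite card, card_singleton, card_univ]
  rw [prod_ite, prod_const_one, one_mul, prod_const, ← card_compl]
  congr
  ext
  simp

lemma exists_agree_of_hammingDist_le {w c : ι → α} {r : ℕ} (h : hammingDist w c ≤ r) :
    ∃ S ∈ powersetCard (Fintype.card ι - r) univ, ∀ i ∈ S, w i = c i := by
  have hagree : Fintype.card ι - r ≤ #{i | w i = c i} := by
    have := card_filter_add_card_filter_not (s := univ) fun i => w i = c i
    rw [card_univ] at this
    simp only [hammingDist, ne_eq] at h
    omega
  obtain ⟨S, hS, hcard⟩ := exists_subset_card_eq hagree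
  exact ⟨S, mem_powersetCard.2 ⟨subset_univ S, hcard⟩, fun i hi => (mem_filter.1 (hS hi)).2⟩

lemma exists_separated_covering_code [DecidableEq ι] [Fintype α] (r : ℕ) :
    ∃ Code : Finset (ι → α), (∀ u ∈ Code, ∀ v ∈ Code, u ≠ v → r < hammingDist u v) ∧
      ∀ w, ∃ c ∈ Code, hammingDist w c ≤ r := by
  let Separated (s : Finset (ι → α)) : Prop := ∀ u ∈ s, ∀ v ∈ s, u ≠ v → r < hammingDist u v
  obtain ⟨Code, hCode, hmax⟩ := (univ.filter Separated).exists_max_image card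
    ⟨∅, by simp [Separated]⟩
  have hsep : Separated Code := (mem_filter.1 hCode).2
  refine ⟨Code, hsep, fun w => ?_⟩
  by_contra! hfar
  have hw : w ∉ Code := fun hw => by simpa using hfar w hw
  have hins : Separated (insert w Code) := by
    intro u hu v hv huv
    rcases mem_insert.1 hu with rfl | hu' <;> rcases mem_insert.1 hv with rfl | hv'
    · exact absurd rfl huv
    · exact hfar v hv'
    · exact hammingDist_comm v u ▸ hfar u hu'
    · exact hsep u hu' v hv' huv
  have := hmax _ (mem_filter.2 ⟨mem_univ _, hins⟩)
  rw [card_insert_of_notMem hw] at this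
  omega

theorem gilbert_varshamov [DecidableEq ι] [Fintype α] [Nonempty α] (r : ℕ) :
    ∃ Code : Finset (ι → α), (∀ u ∈ Code, ∀ v ∈ Code, u ≠ v → r < hammingDist u v) ∧
      Fintype.card α ^ (Fintype.card ι - r) ≤
        #Code * (Fintype.card ι).choose (Fintype.card ι - r) := by
  obtain ⟨Code, hsep, hcov⟩ := exists_separated_covering_code (ι := ι) (α := α) r
  refine ⟨Code, hsep, ?_⟩
  set n := Fintype.card ι
  set q := Fintype.card α
  set m := n - r
  have hcover : (univ : Finset (ι → α)) ⊆ Code.biUnion fun c =>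
      (powersetCard m univ).biUnion fun S => {w | ∀ i ∈ S, w i = c i} := by
    intro w _
    obtain ⟨c, hc, hwc⟩ := hcov w
    obtain ⟨S, hS, hagree⟩ := exists_agree_of_hammingDist_le hwc
    exact mem_biUnion.2 ⟨c, hc, mem_biUnion.2 ⟨S, hS, by simpa using hagree⟩⟩
  have hcount : q ^ n ≤ #Code * (n.choose m * q ^ (n - m)) :=
    calc q ^ n = #(univ : Finset (ι → α)) := by simp [q, n]
      _ ≤ _ := card_le_card hcover
      _ ≤ _ := card_biUnion_le_card_mul _ _ _ fun c _ =>
        (card_biUnion_le_card_mul _ _ _ fun S hS => by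
          rw [card_filter_forall_mem_eq, (mem_powersetCard.1 hS).2]).trans_eq
        (by rw [card_powersetCard, card_univ])
  have hsplit : q ^ n = q ^ m * q ^ (n - m) := by rw [← pow_add]; congr 1; omega
  rw [hsplit, ← mul_assoc] at hcount
  exact Nat.le_of_mul_le_mul_right hcount (by positivity)

end HammingCode

lemma cast_choose_mul_pow_le (n k : ℕ) : (n.choose k : ℝ) * k ^ k ≤ (exp 1 * n) ^ k := by
  have hk : (k : ℝ) ^ k ≤ k.factorial * exp 1 ^ k := by
    rw [← exp_nat_mul, mul_one, ← div_le_iff₀' (by positivity)]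
    exact pow_div_factorial_le_exp (k : ℝ) (Nat.cast_nonneg k) k
  calc (n.choose k : ℝ) * k ^ k ≤ (n ^ k / k.factorial) * (k.factorial * exp 1 ^ k) :=
        mul_le_mul (Nat.choose_le_pow_div k n) hk (by positivity) (by positivity)
    _ = (exp 1 * n) ^ k := by field_simp; ring

lemma rpow_le_of_pow_le_mul_choose {q N t : ℝ} {K m : ℕ} (hq : 0 ≤ q) (ht : 0 ≤ t)
    (htK : t * K ≤ m) (hmK : m ≤ K) (hb : 1 ≤ q * t / exp 1)
    (hN : q ^ m ≤ N * K.choose m) : (q * t / exp 1) ^ (t * K) ≤ N := by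
  have hpow : (q * t / exp 1) ^ (t * K) ≤ (q * t / exp 1) ^ m := by
    rw [← rpow_natCast]; exact rpow_le_rpow_of_exponent_le hb htK
  refine hpow.trans ?_
  rcases Nat.eq_zero_or_pos m with rfl | hm
  · simpa using hN
  have hchoose : (0 : ℝ) < K.choose m := by exact_mod_cast Nat.choose_pos hmK
  have htm : q * t * K ≤ q * m := by nlinarith
  refine le_of_mul_le_mul_right ?_ (mul_pos hchoose (pow_pos (Nat.cast_pos.2 hm) m))
  calc (q * t / exp 1) ^ m * (K.choose m * (m : ℝ) ^ m)
      ≤ (q * t / exp 1) ^ m * (exp 1 * K) ^ m :=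
        mul_le_mul_of_nonneg_left (cast_choose_mul_pow_le K m)
          (pow_nonneg (zero_le_one.trans hb) m)
    _ = (q * t * K) ^ m := by rw [← mul_pow]; congr 1; field_simp
    _ ≤ (q * m) ^ m := by gcongr
    _ = q ^ m * m ^ m := mul_pow q m m
    _ ≤ N * (K.choose m * m ^ m) := by rw [← mul_assoc]; gcongr

lemma qaryEntropy_one_sub_le {q : ℕ} (hq : 2 ≤ q) {ε : ℝ} (hε : ε ≤ 1) :
    qaryEntropy q (1 - ε) ≤ 1 - ε + ε * (1 - log ε) / log q := by
  have hq' : (2 : ℝ) ≤ q := by exact_mod_cast hq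
  have hlogq : 0 < log q := log_pos (by linarith)
  have hratio : log (q - 1) / log q ≤ 1 :=
    (div_le_one hlogq).2 (log_le_log (by linarith) (by linarith))
  have hnegMulLog : -((1 - ε) * log (1 - ε)) ≤ ε := by
    have := negMulLog_le_one_sub_self (sub_nonneg.2 hε)
    rw [negMulLog] at this
    linarith
  calc qaryEntropy q (1 - ε)
      = (1 - ε) * (log (q - 1) / log q) + (-((1 - ε) * log (1 - ε)) + ε * -log ε) / log q := by
        simp only [qaryEntropy, logb, sub_sub_cancel]; ring
    _ ≤ (1 - ε) * 1 + (ε + ε * -log ε) / log q := by gcongr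
    _ = 1 - ε + ε * (1 - log ε) / log q := by ring

lemma qaryEntropy_le_of_loglog_ge {C : ℝ} (hC : 0 < C) {q : ℕ} (hq : 2 ≤ q)
    (hε : log q / (C * q) ≤ 1) (hL : 2 * (log C + 1) ≤ log (log q)) :
    qaryEntropy q (1 - log q / (C * q)) ≤ 1 - log (log q) / (2 * C * q) := by
  have hq' : (2 : ℝ) ≤ q := by exact_mod_cast hq
  have hlogq : 0 < log q := log_pos (by linarith)
  have hCq : 0 < C * q := by positivity
  have hlogε : log (log q / (C * q)) = log (log q) - log C - log q := by
    rw [log_div hlogq.ne' hCq.ne', log_mul hC.ne' (by positivity)]; ring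
  calc qaryEntropy q (1 - log q / (C * q))
      ≤ 1 - log q / (C * q) + log q / (C * q) * (1 - log (log q / (C * q))) / log q :=
        qaryEntropy_one_sub_le hq hε
    _ = 1 + (1 + log C - log (log q)) / (C * q) := by rw [hlogε]; field_simp; ring
    _ ≤ 1 + (-(log (log q) / 2)) / (C * q) := by gcongr; linarith
    _ = 1 - log (log q) / (2 * C * q) := by field_simp; ring

lemma exists_code_of_loglog_ge {C : ℝ} (hC : 0 < C) {q : ℕ} (hq : 3 ≤ q)
    (hε : log q / (C * q) ≤ 1) (hL : 2 * (log C + 1) ≤ log (log q)) (K : ℕ) :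
    ∃ Code : Finset (Fin K → Fin q),
      (∀ u ∈ Code, ∀ v ∈ Code, u ≠ v → (1 - log q / (C * q)) * K ≤ (hammingDist u v : ℝ)) ∧
      (q : ℝ) ^ (((K : ℝ) * log (log q)) / (2 * C * q)) ≤ #Code := by
  have hq' : (3 : ℝ) ≤ q := by exact_mod_cast hq
  have hlogq : 1 < log q := by
    rw [lt_log_iff_exp_lt (by linarith)]; linarith [exp_one_lt_d9]
  set ε := log q / (C * q) with hεdef
  set L := log (log q)
  have hε0 : 0 ≤ ε := by positivity
  have hL0 : 0 < L := log_pos hlogq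
  have hdist0 : 0 ≤ (1 - ε) * K := by have := sub_nonneg.2 hε; positivity
  set r := ⌊(1 - ε) * K⌋₊
  have hr : (r : ℝ) ≤ (1 - ε) * K := Nat.floor_le hdist0
  have hrK : r ≤ K := by
    have : (1 - ε) * K ≤ K := by nlinarith [K.cast_nonneg (α := ℝ)]
    exact_mod_cast hr.trans this
  have : NeZero q := ⟨by omega⟩
  obtain ⟨Code, hsep, hcard⟩ := gilbert_varshamov (ι := Fin K) (α := Fin q) r
  simp only [Fintype.card_fin] at hcard
  refine ⟨Code, fun u hu v hv huv => ?_, ?_⟩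
  · have hlt := hsep u hu v hv huv
    calc (1 - ε) * K ≤ r + 1 := (Nat.lt_floor_add_one _).le
      _ ≤ hammingDist u v := by exact_mod_cast hlt
  have hbase : q * ε / exp 1 = log q / (C * exp 1) := by rw [hεdef]; field_simp
  have hlogb : L / 2 ≤ log (q * ε / exp 1) := by
    rw [hbase, log_div (by positivity) (by positivity), log_mul hC.ne' (exp_pos 1).ne', log_exp]
    linarith
  have hεK : ε * K ≤ ((K - r : ℕ) : ℝ) := by rw [Nat.cast_sub hrK]; linarith
  calc (q : ℝ) ^ (((K : ℝ) * L) / (2 * C * q)) = exp (ε * K * (L / 2)) := by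
        rw [rpow_def_of_pos (by positivity), hεdef]; congr 1; field_simp
    _ ≤ exp (ε * K * log (q * ε / exp 1)) := by gcongr
    _ = (q * ε / exp 1) ^ (ε * K) := by rw [rpow_def_of_pos (by positivity), mul_comm]
    _ ≤ #Code := rpow_le_of_pow_le_mul_choose (by positivity) hε0 hεK (Nat.sub_le K r)
        ((log_nonneg_iff (by positivity)).1 (by linarith)) (by exact_mod_cast hcard)

/-- For every constant `C > 0` and `τ = 1 − log q/(Cq)`, for all sufficiently large `q`
the `q`-ary entropy satisfies `H_q(τ) ≤ 1 − log(log q)/(2Cq)`, and consequently the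
Gilbert–Varshamov bound gives, for every `K ≥ 1`, a code of length `K` over an alphabet
of size `q` with minimum Hamming distance at least `τK` and size at least
`q^{K·log(log q)/(2Cq)}`, i.e. `A_q(K, τK) ≥ q^{K·log(log q)/(2Cq)}`. -/
theorem entropy_bound_and_gv_separation (C : ℝ) (hC : 0 < C) :
    ∃ q₀ : ℕ, ∀ q : ℕ, q₀ ≤ q →
      (qaryEntropy q (1 - Real.log q / (C * q)) ≤
          1 - Real.log (Real.log q) / (2 * C * q)) ∧
      ∀ K : ℕ, 1 ≤ K →
        ∃ Code : Finset (Fin K → Fin q),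
          (∀ u ∈ Code, ∀ v ∈ Code, u ≠ v →
              (1 - Real.log q / (C * q)) * K ≤ (hammingDist u v : ℝ)) ∧
          (q : ℝ) ^ (((K : ℝ) * Real.log (Real.log q)) / (2 * C * q)) ≤ Code.card := by
  have hcast := tendsto_natCast_atTop_atTop (R := ℝ)
  have hε : ∀ᶠ q : ℕ in atTop, log q / (C * q) ≤ 1 := by
    filter_upwards [((tendsto_pow_log_div_mul_add_atTop C 0 1 hC.ne').comp hcast).eventually
      (eventually_le_nhds zero_lt_one)] with q hq
    simpa using hq
  have hL : ∀ᶠ q : ℕ in atTop, 2 * (log C + 1) ≤ log (log q) :=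
    ((tendsto_log_atTop.comp tendsto_log_atTop).comp hcast).eventually_ge_atTop _
  obtain ⟨q₀, hq₀⟩ := eventually_atTop.1 (((eventually_ge_atTop 3).and hε).and hL)
  refine ⟨q₀, fun q hq => ?_⟩
  obtain ⟨⟨hq3, hεq⟩, hLq⟩ := hq₀ q hq
  exact ⟨qaryEntropy_le_of_loglog_ge hC (by omega) hεq hLq,
    fun K _ => exists_code_of_loglog_ge hC hq3 hεq hLq K⟩
end

section
/- (Strong convexity of softmax cross-entropy on the orthogonal complement of constants) Let p̂ ∈ R^n be a probability vector with all entries positive, and let H = diag(p̂) − p̂p̂ᵀ be the Hessian of the log-sum-exp/cross-entropy loss. Then for every unit vector v with ∑_j v_j = 0, vᵀHv ≥ (min_j p̂_j)². -/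
open scoped BigOperators

/-- **Strong convexity of softmax cross-entropy on the orthogonal complement of
constants.** Let `p̂` be a probability vector with all entries positive, and let
`H = diag(p̂) − p̂p̂ᵀ` be the Hessian of the log-sum-exp/cross-entropy loss. Then for
every unit vector `v` with `∑_j v_j = 0`,
`vᵀHv = ∑_j p̂_j v_j² − (∑_j p̂_j v_j)² ≥ (min_j p̂_j)²`. -/
theorem softmax_hessian_strong_convexity
    {n : Type*} [Fintype n] [Nonempty n]
    (phat : n → ℝ) (hpos : ∀ j, 0 < phat j) (hsum : ∑ j, phat j = 1)
    (v : n → ℝ) (hv : ∑ j, (v j) ^ 2 = 1) (hv0 : ∑ j, v j = 0) :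
    (Finset.univ.inf' Finset.univ_nonempty phat) ^ 2 ≤
      ∑ j, phat j * (v j) ^ 2 - (∑ j, phat j * v j) ^ 2 := by
  set m := Finset.univ.inf' Finset.univ_nonempty phat with hm
  have hmle : ∀ j, m ≤ phat j := fun j =>
    Finset.inf'_le _ (Finset.mem_univ j)
  obtain ⟨j0⟩ := ‹Nonempty n›
  have hmpos : 0 < m := by
    rw [hm, Finset.lt_inf'_iff]
    exact fun j _ => hpos j
  have hm1 : m ≤ 1 := by
    have h1 : phat j0 ≤ 1 := by
      rw [← hsum]
      exact Finset.single_le_sum (fun i _ => (hpos i).le) (Finset.mem_univ j0)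
    exact (hmle j0).trans h1
  set μ := ∑ j, phat j * v j with hμ
  have key : ∑ j, phat j * (v j - μ) ^ 2 = ∑ j, phat j * (v j) ^ 2 - μ ^ 2 := by
    have : ∀ j, phat j * (v j - μ) ^ 2 =
        phat j * (v j) ^ 2 - 2 * μ * (phat j * v j) + μ ^ 2 * phat j := by
      intro j; ring
    rw [Finset.sum_congr rfl (fun j _ => this j)]
    rw [Finset.sum_add_distrib, Finset.sum_sub_distrib, ← Finset.mul_sum,
      ← Finset.mul_sum, hsum, ← hμ]
    ring
  have hsq : (1 : ℝ) ≤ ∑ j, (v j - μ) ^ 2 := by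
    have : ∑ j, (v j - μ) ^ 2 =
        ∑ j, (v j) ^ 2 - 2 * μ * (∑ j, v j) + (Fintype.card n : ℝ) * μ ^ 2 := by
      have h : ∀ j, (v j - μ) ^ 2 = (v j) ^ 2 - 2 * μ * v j + μ ^ 2 := by
        intro j; ring
      rw [Finset.sum_congr rfl (fun j _ => h j), Finset.sum_add_distrib,
        Finset.sum_sub_distrib, ← Finset.mul_sum, Finset.sum_const,
        Finset.card_univ, nsmul_eq_mul]
    rw [this, hv, hv0]
    have : 0 ≤ (Fintype.card n : ℝ) * μ ^ 2 := by positivity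
    linarith
  have hlb : m * ∑ j, (v j - μ) ^ 2 ≤ ∑ j, phat j * (v j - μ) ^ 2 := by
    rw [Finset.mul_sum]
    apply Finset.sum_le_sum
    intro j _
    exact mul_le_mul_of_nonneg_right (hmle j) (sq_nonneg _)
  have h1 : m * 1 ≤ m * ∑ j, (v j - μ) ^ 2 :=
    mul_le_mul_of_nonneg_left hsq hmpos.le
  have h2 : m ^ 2 ≤ m := by nlinarith
  calc m ^ 2 ≤ m := h2
    _ = m * 1 := (mul_one m).symm
    _ ≤ m * ∑ j, (v j - μ) ^ 2 := h1
    _ ≤ ∑ j, phat j * (v j - μ) ^ 2 := hlb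
    _ = ∑ j, phat j * (v j) ^ 2 - μ ^ 2 := key
end

section
/- Let X be a Markov chain on finite state space S, C_k ⊆ S a subset, and suppose the reduced (watched) chain on C_k — obtained by recording X only at successive visit times to C_k — has transition matrix equal to the stochastic complement S_kk = P_kk + P_{k*}(I − P_k)^{−1}P_{*k}. If the original kernel P is irreducible and stochastic, then S_kk is an irreducible stochastic matrix. -/
/-!
Irreducibility of `P` and `C ≠ ∅` make the block `Q = P_k` transient: from every state outside
`C` some power of `Q` has row sum `< 1`. A minimum principle then shows that `Q v ≤ v` forces
`v ≥ 0`, so `1 - Q` is invertible with `(1 - Q)⁻¹ ≥ 0`. The hitting matrix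
`H = (1 - Q)⁻¹ P_{*k}` is therefore nonnegative, satisfies `H = P_{*k} + Q H`, and `H 1 = 1`
because `P_{*k} 1 = (1 - Q) 1`. Writing `S_kk = P_kk + P_{k*} H` shows that `S_kk` is
stochastic, and a path of positive entries of `P` between states of `C` collapses, one excursion
outside `C` at a time, into a path of positive entries of `S_kk`.
-/

open scoped Matrix

namespace Matrix

section Blocks

variable {S R : Type*} [Fintype S] [DecidableEq S] [CommRing R]

/-- Entry `(d, c)` is the probability that the chain started at `d ∉ C` enters `C` first at `c`. -/
noncomputable def hittingMatrix (P : Matrix S S R) (C : Finset S) : Matrix {x // x ∉ C} C R :=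
  (1 - P.toBlock (· ∉ C) (· ∉ C))⁻¹ * P.toBlock (· ∉ C) (· ∈ C)

noncomputable def stochasticComplement (P : Matrix S S R) (C : Finset S) : Matrix C C R :=
  P.toBlock (· ∈ C) (· ∈ C) +
    P.toBlock (· ∈ C) (· ∉ C) * (1 - P.toBlock (· ∉ C) (· ∉ C))⁻¹ * P.toBlock (· ∉ C) (· ∈ C)

lemma stochasticComplement_eq_add_mul_hittingMatrix (P : Matrix S S R) (C : Finset S) :
    stochasticComplement P C =
      P.toBlock (· ∈ C) (· ∈ C) + P.toBlock (· ∈ C) (· ∉ C) * hittingMatrix P C := by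
  rw [stochasticComplement, hittingMatrix, Matrix.mul_assoc]

end Blocks

section OrderedField

variable {l m n o R : Type*} [Field R] [LinearOrder R] [IsStrictOrderedRing R]

lemma mul_apply_nonneg [Fintype m] {A : Matrix l m R} {B : Matrix m o R}
    (hA : ∀ i j, 0 ≤ A i j) (hB : ∀ i j, 0 ≤ B i j) (i : l) (k : o) : 0 ≤ (A * B) i k :=
  Finset.sum_nonneg fun j _ => mul_nonneg (hA i j) (hB j k)

lemma mul_apply_pos_iff [Fintype m] {A : Matrix l m R} {B : Matrix m o R}
    (hA : ∀ i j, 0 ≤ A i j) (hB : ∀ i j, 0 ≤ B i j) {i : l} {k : o} :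
    0 < (A * B) i k ↔ ∃ j, 0 < A i j ∧ 0 < B j k := by
  rw [mul_apply, Finset.sum_pos_iff_of_nonneg fun j _ => mul_nonneg (hA i j) (hB j k)]
  simp only [Finset.mem_univ, true_and]
  refine exists_congr fun j => ⟨fun h => ?_, fun h => mul_pos h.1 h.2⟩
  exact ⟨pos_of_mul_pos_left h (hB j k), pos_of_mul_pos_right h (hA i j)⟩

lemma mulVec_le_mulVec [Fintype n] {A : Matrix m n R} (hA : ∀ i j, 0 ≤ A i j) {v w : n → R}
    (h : v ≤ w) : A *ᵥ v ≤ A *ᵥ w := fun i =>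
  Finset.sum_le_sum fun j _ => mul_le_mul_of_nonneg_left (h j) (hA i j)

variable [Fintype n] [DecidableEq n]

lemma exists_pow_apply_pos_iff_reflTransGen {A : Matrix n n R} (hA : ∀ i j, 0 ≤ A i j)
    {i j : n} : (∃ k, 0 < (A ^ k) i j) ↔ Relation.ReflTransGen (fun a b => 0 < A a b) i j := by
  constructor
  · rintro ⟨k, hk⟩
    induction k generalizing j with
    | zero =>
      obtain rfl | hij := eq_or_ne i j
      · exact .refl
      · simp [one_apply_ne hij] at hk
    | succ k ih =>
      rw [pow_succ, mul_apply_pos_iff (pow_apply_nonneg hA k) hA] at hk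
      obtain ⟨l, hil, hlj⟩ := hk
      exact (ih hil).tail hlj
  · intro h
    induction h with
    | refl => exact ⟨0, by simp⟩
    | tail _ hbc ih =>
      obtain ⟨k, hk⟩ := ih
      refine ⟨k + 1, ?_⟩
      rw [pow_succ, mul_apply_pos_iff (pow_apply_nonneg hA k) hA]
      exact ⟨_, hk, hbc⟩

lemma pow_mulVec_le_of_mulVec_le {A : Matrix n n R} (hA : ∀ i j, 0 ≤ A i j) {v : n → R}
    (hv : A *ᵥ v ≤ v) (k : ℕ) : (A ^ k) *ᵥ v ≤ v := by
  induction k with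
  | zero => simp
  | succ k ih =>
    calc (A ^ (k + 1)) *ᵥ v = (A ^ k) *ᵥ (A *ᵥ v) := by rw [pow_succ, mulVec_mulVec]
      _ ≤ (A ^ k) *ᵥ v := mulVec_le_mulVec (pow_apply_nonneg hA k) hv
      _ ≤ v := ih

def IsTransient (Q : Matrix n n R) : Prop :=
  ∀ i, ∃ k, ∑ j, (Q ^ k) i j < 1

lemma IsTransient.nonneg_of_mulVec_le {Q : Matrix n n R} (hQ : Q.IsTransient)
    (hQ0 : ∀ i j, 0 ≤ Q i j) {v : n → R} (hv : Q *ᵥ v ≤ v) : 0 ≤ v := by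
  cases isEmpty_or_nonempty n
  · exact isEmptyElim
  obtain ⟨i₀, hmin⟩ := Finite.exists_min v
  suffices 0 ≤ v i₀ from fun i => this.trans (hmin i)
  by_contra! hneg
  obtain ⟨k, hk⟩ := hQ i₀
  -- Row `i₀` of `Q ^ k` has mass `< 1`, so it averages `v ≥ v i₀` to more than `v i₀ < 0`.
  have hlow : (∑ j, (Q ^ k) i₀ j) * v i₀ ≤ ((Q ^ k) *ᵥ v) i₀ := by
    rw [Finset.sum_mul]
    exact Finset.sum_le_sum fun j _ =>
      mul_le_mul_of_nonneg_left (hmin j) (pow_apply_nonneg hQ0 k i₀ j)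
  have hup := pow_mulVec_le_of_mulVec_le hQ0 hv k i₀
  nlinarith

lemma IsTransient.isUnit_det_one_sub {Q : Matrix n n R} (hQ : Q.IsTransient)
    (hQ0 : ∀ i j, 0 ≤ Q i j) : IsUnit (1 - Q).det := by
  rw [isUnit_iff_ne_zero]
  intro hdet
  obtain ⟨v, hv0, hv⟩ := exists_mulVec_eq_zero_iff.mpr hdet
  have hfix : Q *ᵥ v = v := by
    rw [sub_mulVec, one_mulVec, sub_eq_zero] at hv
    exact hv.symm
  have hpos := hQ.nonneg_of_mulVec_le hQ0 hfix.le
  have hneg := hQ.nonneg_of_mulVec_le hQ0 (v := -v) (by rw [mulVec_neg, hfix])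
  exact hv0 (le_antisymm (neg_nonneg.mp hneg) hpos)

lemma IsTransient.inv_one_sub_apply_nonneg {Q : Matrix n n R} (hQ : Q.IsTransient)
    (hQ0 : ∀ i j, 0 ≤ Q i j) (i j : n) : 0 ≤ (1 - Q)⁻¹ i j := by
  set v := (1 - Q)⁻¹ *ᵥ Pi.single j 1
  have hv : (1 - Q) *ᵥ v = Pi.single j 1 := by
    rw [mulVec_mulVec, mul_nonsing_inv _ (hQ.isUnit_det_one_sub hQ0), one_mulVec]
  rw [sub_mulVec, one_mulVec] at hv
  have hsuper : Q *ᵥ v ≤ v := sub_nonneg.mp (hv ▸ Pi.single_nonneg.mpr zero_le_one)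
  simpa [v, mulVec_single_one] using hQ.nonneg_of_mulVec_le hQ0 hsuper i

variable {S : Type*} [Fintype S] [DecidableEq S] {P : Matrix S S R} {C : Finset S}

lemma toBlock_pow_apply_le (hP0 : ∀ i j, 0 ≤ P i j) (p : S → Prop) [DecidablePred p] (k : ℕ)
    (i j : {x // p x}) : (P.toBlock p p ^ k) i j ≤ (P ^ k) i j := by
  induction k generalizing j with
  | zero =>
    obtain rfl | hij := eq_or_ne i j
    · simp
    · simp [one_apply_ne hij, one_apply_ne (Subtype.coe_injective.ne hij)]
  | succ k ih =>
    rw [pow_succ, pow_succ, mul_apply, mul_apply, ← Fintype.sum_subtype_add_sum_subtype p]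
    refine le_add_of_le_of_nonneg ?_ (Finset.sum_nonneg fun l _ =>
      mul_nonneg (pow_apply_nonneg hP0 k _ _) (hP0 _ _))
    exact Finset.sum_le_sum fun l _ => mul_le_mul_of_nonneg_right (ih l) (hP0 _ _)

lemma toBlock_mulVec_one_add_toBlock_mulVec_one (hP : P ∈ rowStochastic R S) (p : S → Prop)
    (C : Finset S) : P.toBlock p (· ∈ C) *ᵥ 1 + P.toBlock p (· ∉ C) *ᵥ 1 = 1 := by
  ext i
  have hsplit := (Fintype.sum_subtype_add_sum_subtype (· ∈ C) (P i)).trans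
    (sum_row_of_mem_rowStochastic hP i)
  simp only [Pi.add_apply, Pi.one_apply, mulVec, dotProduct, toBlock_apply, mul_one]
  -- the two sides carry different `Fintype` instances on `↥C`
  convert hsplit using 4

lemma isTransient_toBlock_notMem (hP : P ∈ rowStochastic R S)
    (hirr : ∀ i j, ∃ k, 0 < (P ^ k) i j) (hC : C.Nonempty) :
    (P.toBlock (· ∉ C) (· ∉ C)).IsTransient := by
  obtain ⟨c, hc⟩ := hC
  intro d
  obtain ⟨k, hk⟩ := hirr d c
  have hPk := (rowStochastic R S).pow_mem hP k
  have hsplit := congrFun (toBlock_mulVec_one_add_toBlock_mulVec_one hPk (· ∉ C) C) d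
  simp only [Pi.add_apply, Pi.one_apply] at hsplit
  have henter : 0 < ((P ^ k).toBlock (· ∉ C) (· ∈ C) *ᵥ 1) d := by
    refine hk.trans_le ?_
    simpa [mulVec, dotProduct] using Finset.single_le_sum
      (f := fun e : C => (P ^ k) d e) (fun e _ => nonneg_of_mem_rowStochastic hPk)
      (Finset.mem_univ (⟨c, hc⟩ : C))
  refine ⟨k, ?_⟩
  calc ∑ e, (P.toBlock (· ∉ C) (· ∉ C) ^ k) d e
      ≤ ((P ^ k).toBlock (· ∉ C) (· ∉ C) *ᵥ 1) d := by
        simpa [mulVec, dotProduct] using Finset.sum_le_sum fun e _ =>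
          toBlock_pow_apply_le (fun _ _ => nonneg_of_mem_rowStochastic hP) _ k d e
    _ < 1 := by linarith

lemma hittingMatrix_nonneg (hP0 : ∀ i j, 0 ≤ P i j)
    (hQ : (P.toBlock (· ∉ C) (· ∉ C)).IsTransient) (d : {x // x ∉ C}) (c : C) :
    0 ≤ hittingMatrix P C d c :=
  mul_apply_nonneg (hQ.inv_one_sub_apply_nonneg fun _ _ => hP0 _ _) (fun _ _ => hP0 _ _) d c

lemma hittingMatrix_eq (hP0 : ∀ i j, 0 ≤ P i j)
    (hQ : (P.toBlock (· ∉ C) (· ∉ C)).IsTransient) :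
    hittingMatrix P C =
      P.toBlock (· ∉ C) (· ∈ C) + P.toBlock (· ∉ C) (· ∉ C) * hittingMatrix P C := by
  have h : (1 - P.toBlock (· ∉ C) (· ∉ C)) * hittingMatrix P C = P.toBlock (· ∉ C) (· ∈ C) := by
    rw [hittingMatrix, ← Matrix.mul_assoc,
      mul_nonsing_inv _ (hQ.isUnit_det_one_sub fun _ _ => hP0 _ _), Matrix.one_mul]
  rwa [Matrix.sub_mul, Matrix.one_mul, sub_eq_iff_eq_add] at h

lemma hittingMatrix_mulVec_one (hP : P ∈ rowStochastic R S)
    (hQ : (P.toBlock (· ∉ C) (· ∉ C)).IsTransient) : hittingMatrix P C *ᵥ 1 = 1 := by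
  have hexit : P.toBlock (· ∉ C) (· ∈ C) *ᵥ 1 = (1 - P.toBlock (· ∉ C) (· ∉ C)) *ᵥ 1 := by
    rw [sub_mulVec, one_mulVec]
    exact eq_sub_of_add_eq (toBlock_mulVec_one_add_toBlock_mulVec_one hP _ C)
  rw [hittingMatrix, ← mulVec_mulVec, hexit, mulVec_mulVec,
    nonsing_inv_mul _ (hQ.isUnit_det_one_sub fun _ _ => nonneg_of_mem_rowStochastic hP),
    one_mulVec]

theorem stochasticComplement_mem_rowStochastic (hP : P ∈ rowStochastic R S)
    (hQ : (P.toBlock (· ∉ C) (· ∉ C)).IsTransient) :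
    stochasticComplement P C ∈ rowStochastic R C := by
  have hP0 : ∀ i j, 0 ≤ P i j := fun _ _ => nonneg_of_mem_rowStochastic hP
  rw [stochasticComplement_eq_add_mul_hittingMatrix, mem_rowStochastic]
  refine ⟨fun i j => add_nonneg (hP0 _ _)
    (mul_apply_nonneg (fun _ _ => hP0 _ _) (hittingMatrix_nonneg hP0 hQ) i j), ?_⟩
  rw [add_mulVec, ← mulVec_mulVec, hittingMatrix_mulVec_one hP hQ,
    toBlock_mulVec_one_add_toBlock_mulVec_one hP _ C]

variable (P C) in
def HitsFirstAt (b : S) (c : C) : Prop :=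
  b = c ∨ ∃ hb : b ∉ C, 0 < hittingMatrix P C ⟨b, hb⟩ c

lemma toBlock_add_toBlock_mul_hittingMatrix_pos (hP0 : ∀ i j, 0 ≤ P i j)
    (hQ : (P.toBlock (· ∉ C) (· ∉ C)).IsTransient) {p : S → Prop} {a : {x // p x}} {b : S}
    {c : C} (hab : 0 < P a b) (hbc : HitsFirstAt P C b c) :
    0 < (P.toBlock p (· ∈ C) + P.toBlock p (· ∉ C) * hittingMatrix P C) a c := by
  have hH0 := hittingMatrix_nonneg hP0 hQ
  rw [add_apply]
  rcases hbc with rfl | ⟨hb, hbc⟩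
  · exact add_pos_of_pos_of_nonneg hab (mul_apply_nonneg (fun _ _ => hP0 _ _) hH0 _ _)
  · exact add_pos_of_nonneg_of_pos (hP0 _ _)
      ((mul_apply_pos_iff (fun _ _ => hP0 _ _) hH0).2 ⟨⟨b, hb⟩, hab, hbc⟩)

lemma HitsFirstAt.of_pos (hP0 : ∀ i j, 0 ≤ P i j)
    (hQ : (P.toBlock (· ∉ C) (· ∉ C)).IsTransient) {a b : S} {c : C} (ha : a ∉ C)
    (hab : 0 < P a b) (hbc : HitsFirstAt P C b c) : HitsFirstAt P C a c := by
  refine .inr ⟨ha, ?_⟩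
  rw [hittingMatrix_eq hP0 hQ]
  exact toBlock_add_toBlock_mul_hittingMatrix_pos hP0 hQ (a := ⟨a, ha⟩) hab hbc

lemma stochasticComplement_pos_of_hitsFirstAt (hP0 : ∀ i j, 0 ≤ P i j)
    (hQ : (P.toBlock (· ∉ C) (· ∉ C)).IsTransient) {a b : S} {c : C} (ha : a ∈ C)
    (hab : 0 < P a b) (hbc : HitsFirstAt P C b c) : 0 < stochasticComplement P C ⟨a, ha⟩ c := by
  rw [stochasticComplement_eq_add_mul_hittingMatrix]
  exact toBlock_add_toBlock_mul_hittingMatrix_pos hP0 hQ (a := ⟨a, ha⟩) hab hbc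

lemma exists_hitsFirstAt_of_reflTransGen (hP0 : ∀ i j, 0 ≤ P i j)
    (hQ : (P.toBlock (· ∉ C) (· ∉ C)).IsTransient) {a : S} {j : C}
    (h : Relation.ReflTransGen (fun x y => 0 < P x y) a j) :
    ∃ c, HitsFirstAt P C a c ∧
      Relation.ReflTransGen (fun x y => 0 < stochasticComplement P C x y) c j := by
  induction h using Relation.ReflTransGen.head_induction_on with
  | refl => exact ⟨j, .inl rfl, .refl⟩
  | @head a b hab _ ih =>
    obtain ⟨c, hbc, hcj⟩ := ih
    by_cases ha : a ∈ C
    · exact ⟨⟨a, ha⟩, .inl rfl,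
        .head (stochasticComplement_pos_of_hitsFirstAt hP0 hQ ha hab hbc) hcj⟩
    · exact ⟨c, hbc.of_pos hP0 hQ ha hab, hcj⟩

lemma reflTransGen_stochasticComplement (hP0 : ∀ i j, 0 ≤ P i j)
    (hQ : (P.toBlock (· ∉ C) (· ∉ C)).IsTransient) {i j : C}
    (h : Relation.ReflTransGen (fun x y => 0 < P x y) i j) :
    Relation.ReflTransGen (fun x y => 0 < stochasticComplement P C x y) i j := by
  obtain ⟨c, hic, hcj⟩ := exists_hitsFirstAt_of_reflTransGen hP0 hQ h
  obtain rfl : i = c := by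
    rcases hic with hic | ⟨hi, -⟩
    · exact Subtype.ext hic
    · exact absurd i.2 hi
  exact hcj

end OrderedField

end Matrix

open Matrix

/-- **Stochastic complements of irreducible stochastic matrices are irreducible
stochastic.** Let `P` be an irreducible stochastic matrix on a finite state space `S`,
written in block form with respect to a subset `C` (block `P_kk`), its complement
(block `P_k`), and the off-diagonal blocks `P_{k*}`, `P_{*k}`. Then the stochastic
complement `S_kk = P_kk + P_{k*}(I − P_k)⁻¹P_{*k}` (the transition matrix of the chain
watched on `C`) is an irreducible stochastic matrix. -/
theorem stochastic_complement_irreducible_stochastic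
    {S : Type*} [Fintype S] [DecidableEq S]
    (P : Matrix S S ℝ) (C : Finset S)
    (hpos : ∀ i j, 0 ≤ P i j) (hrow : ∀ i, ∑ j, P i j = 1)
    (hirr : ∀ i j : S, ∃ n : ℕ, 0 < (P ^ n) i j) :
    let Pkk : Matrix {x // x ∈ C} {x // x ∈ C} ℝ := fun i j => P i.1 j.1
    let Pk : Matrix {x // x ∉ C} {x // x ∉ C} ℝ := fun i j => P i.1 j.1
    let Pks : Matrix {x // x ∈ C} {x // x ∉ C} ℝ := fun i j => P i.1 j.1
    let Psk : Matrix {x // x ∉ C} {x // x ∈ C} ℝ := fun i j => P i.1 j.1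
    let Skk : Matrix {x // x ∈ C} {x // x ∈ C} ℝ := Pkk + Pks * (1 - Pk)⁻¹ * Psk
    (∀ i j, 0 ≤ Skk i j) ∧ (∀ i, ∑ j, Skk i j = 1) ∧
      (∀ i j, ∃ n : ℕ, 0 < (Skk ^ n) i j) := by
  obtain rfl | hC := C.eq_empty_or_nonempty
  · refine ⟨?_, ?_, ?_⟩ <;> exact fun i => absurd i.2 (Finset.notMem_empty _)
  have hP : P ∈ rowStochastic ℝ S := mem_rowStochastic_iff_sum.2 ⟨hpos, hrow⟩
  have hQ := isTransient_toBlock_notMem hP hirr hC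
  have hS := stochasticComplement_mem_rowStochastic hP hQ
  have hS0 : ∀ i j, 0 ≤ stochasticComplement P C i j := fun _ _ => nonneg_of_mem_rowStochastic hS
  have hSirr : ∀ i j, ∃ n, 0 < (stochasticComplement P C ^ n) i j := fun i j =>
    (exists_pow_apply_pos_iff_reflTransGen hS0).2 <| reflTransGen_stochasticComplement hpos hQ <|
      (exists_pow_apply_pos_iff_reflTransGen hpos).1 (hirr i j)
  -- `Skk` is `stochasticComplement P C` once `Matrix.toBlock` is unfolded
  exact ⟨hS0, sum_row_of_mem_rowStochastic hS, hSirr⟩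
end

section
/- With the stochastic complement S_kk = P_kk + P_{k*}(I − P_k)^{−1} P_{*k} of an irreducible stochastic matrix P, the maximum row sum norm of the difference satisfies ‖S_kk − P_kk‖_{1,∞} = ‖P_{k*}‖_{1,∞}; in particular if each row of P has at most total mass δ outside the block C_k, then ‖S_kk − P_kk‖_{1,∞} ≤ δ. -/
open scoped BigOperators

attribute [local instance] Matrix.linftyOpNormedAddCommGroup Matrix.linftyOpNormedRing
  Matrix.linftyOpNormedAlgebra

private lemma mat_pow_nonneg {T : Type*} [Fintype T] [DecidableEq T] (Q : Matrix T T ℝ)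
    (h : ∀ i j, 0 ≤ Q i j) : ∀ (n : ℕ) (i j : T), 0 ≤ (Q ^ n) i j := by
  intro n
  induction n with
  | zero =>
    intro i j
    rw [pow_zero, Matrix.one_apply]
    split <;> norm_num
  | succ n ih =>
    intro i j
    rw [pow_succ, Matrix.mul_apply]
    exact Finset.sum_nonneg fun k _ => mul_nonneg (ih i k) (h k j)

private lemma mat_pow_rowsum {T : Type*} [Fintype T] [DecidableEq T] (Q : Matrix T T ℝ)
    (h : ∀ i, ∑ j, Q i j = 1) : ∀ (n : ℕ) (i : T), ∑ j, (Q ^ n) i j = 1 := by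
  intro n
  induction n with
  | zero =>
    intro i
    simp [Matrix.one_apply]
  | succ n ih =>
    intro i
    rw [pow_succ]
    simp only [Matrix.mul_apply]
    calc ∑ j, ∑ k, (Q ^ n) i k * Q k j
        = ∑ k, ∑ j, (Q ^ n) i k * Q k j := Finset.sum_comm
      _ = ∑ k, (Q ^ n) i k * ∑ j, Q k j := by simp [Finset.mul_sum]
      _ = ∑ k, (Q ^ n) i k := by simp [h]
      _ = 1 := ih i

private lemma mat_rowsum_succ_le {T : Type*} [Fintype T] [DecidableEq T] (Q : Matrix T T ℝ)
    (hpos : ∀ i j, 0 ≤ Q i j) (h : ∀ i, ∑ j, Q i j ≤ 1) (n : ℕ) (i : T) :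
    ∑ j, (Q ^ (n + 1)) i j ≤ ∑ j, (Q ^ n) i j := by
  rw [pow_succ]
  simp only [Matrix.mul_apply]
  calc ∑ j, ∑ k, (Q ^ n) i k * Q k j
      = ∑ k, ∑ j, (Q ^ n) i k * Q k j := Finset.sum_comm
    _ = ∑ k, (Q ^ n) i k * ∑ j, Q k j := by simp [Finset.mul_sum]
    _ ≤ ∑ k, (Q ^ n) i k * 1 :=
        Finset.sum_le_sum fun k _ =>
          mul_le_mul_of_nonneg_left (h k) (mat_pow_nonneg Q hpos n i k)
    _ = ∑ k, (Q ^ n) i k := by simp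

/-- **Row-sum norm of the stochastic complement perturbation.** For an irreducible
stochastic matrix `P` in block form with respect to a nonempty subset `C`, the stochastic
complement `S_kk = P_kk + P_{k*}(I − P_k)⁻¹P_{*k}` satisfies
`‖S_kk − P_kk‖_{1,∞} = ‖P_{k*}‖_{1,∞}` (maximum absolute row sums). In particular, if
each row (in `C`) of `P` has total mass at most `δ` outside the block `C`, then
`‖S_kk − P_kk‖_{1,∞} ≤ δ`. -/
theorem stochastic_complement_row_sum_norm
    {S : Type*} [Fintype S] [DecidableEq S]
    (P : Matrix S S ℝ) (C : Finset S) (hC : C.Nonempty)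
    (hpos : ∀ i j, 0 ≤ P i j) (hrow : ∀ i, ∑ j, P i j = 1)
    (hirr : ∀ i j : S, ∃ n : ℕ, 0 < (P ^ n) i j) :
    let Pkk : Matrix {x // x ∈ C} {x // x ∈ C} ℝ := fun i j => P i.1 j.1
    let Pk : Matrix {x // x ∉ C} {x // x ∉ C} ℝ := fun i j => P i.1 j.1
    let Pks : Matrix {x // x ∈ C} {x // x ∉ C} ℝ := fun i j => P i.1 j.1
    let Psk : Matrix {x // x ∉ C} {x // x ∈ C} ℝ := fun i j => P i.1 j.1
    let Skk : Matrix {x // x ∈ C} {x // x ∈ C} ℝ := Pkk + Pks * (1 - Pk)⁻¹ * Psk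
    ((⨆ i : {x // x ∈ C}, ∑ j : {x // x ∈ C}, |Skk i j - Pkk i j|) =
        ⨆ i : {x // x ∈ C}, ∑ j : {x // x ∉ C}, |Pks i j|) ∧
      ∀ δ : ℝ, (∀ i : {x // x ∈ C}, ∑ j : {x // x ∉ C}, |Pks i j| ≤ δ) →
        (⨆ i : {x // x ∈ C}, ∑ j : {x // x ∈ C}, |Skk i j - Pkk i j|) ≤ δ := by
  classical
  intro Pkk Pk Pks Psk Skk
  obtain ⟨c0, hc0⟩ := hC
  haveI hne : Nonempty {x // x ∈ C} := ⟨⟨c0, hc0⟩⟩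
  -- row splitting
  have hsplit : ∀ (f : S → ℝ),
      (∑ j : {x // x ∈ C}, f j.1) + ∑ j : {x // x ∉ C}, f j.1 = ∑ j, f j := by
    intro f
    have h1 : ∑ j : {x // x ∈ C}, f j.1 = ∑ j ∈ C, f j :=
      (Finset.sum_subtype C (fun x => Iff.rfl) f).symm
    have h2 : ∑ j : {x // x ∉ C}, f j.1 = ∑ j ∈ Cᶜ, f j :=
      (Finset.sum_subtype Cᶜ (fun x => Finset.mem_compl) f).symm
    rw [h1, h2]
    exact Finset.sum_add_sum_compl C f
  have hQpos : ∀ i j, 0 ≤ Pk i j := fun i j => hpos _ _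
  have hQnpos := mat_pow_nonneg Pk hQpos
  have hPnpos := mat_pow_nonneg P hpos
  have hPnrow := mat_pow_rowsum P hrow
  have hQrow : ∀ i, ∑ j, Pk i j ≤ 1 := by
    intro i
    have h1 := hsplit (fun j => P i.1 j)
    have h2 : 0 ≤ ∑ j : {x // x ∈ C}, P i.1 j.1 :=
      Finset.sum_nonneg fun j _ => hpos _ _
    have h3 : ∑ j, P i.1 j = 1 := hrow i.1
    have : ∑ j : {x // x ∉ C}, Pk i j = ∑ j : {x // x ∉ C}, P i.1 j.1 := rfl
    rw [this]
    linarith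
  -- entrywise comparison of powers
  have hQle : ∀ (n : ℕ) (i j : {x // x ∉ C}), (Pk ^ n) i j ≤ (P ^ n) i.1 j.1 := by
    intro n
    induction n with
    | zero =>
      intro i j
      rw [pow_zero, pow_zero, Matrix.one_apply, Matrix.one_apply]
      by_cases h : i = j
      · simp [h]
      · have h' : i.1 ≠ j.1 := fun hh => h (Subtype.ext hh)
        simp [h, h']
    | succ n ih =>
      intro i j
      rw [pow_succ, pow_succ, Matrix.mul_apply, Matrix.mul_apply]
      have step1 : ∑ k : {x // x ∉ C}, (Pk ^ n) i k * Pk k j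
          ≤ ∑ k : {x // x ∉ C}, (P ^ n) i.1 k.1 * P k.1 j.1 :=
        Finset.sum_le_sum fun k _ =>
          mul_le_mul (ih i k) (le_refl (Pk k j)) (hQpos k j) (hPnpos n i.1 k.1)
      have step2 : ∑ k : {x // x ∉ C}, (P ^ n) i.1 k.1 * P k.1 j.1
          ≤ ∑ k, (P ^ n) i.1 k * P k j.1 := by
        have h1 := hsplit (fun k => (P ^ n) i.1 k * P k j.1)
        have h2 : 0 ≤ ∑ k : {x // x ∈ C}, (P ^ n) i.1 k.1 * P k.1 j.1 :=
          Finset.sum_nonneg fun k _ => mul_nonneg (hPnpos n _ _) (hpos _ _)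
        linarith
      exact le_trans step1 step2
  -- each row of some power has row sum < 1
  have hev : ∀ i : {x // x ∉ C}, ∃ n, ∑ j, (Pk ^ n) i j < 1 := by
    intro i
    obtain ⟨n, hn⟩ := hirr i.1 c0
    refine ⟨n, ?_⟩
    have h1 : ∑ j : {x // x ∉ C}, (Pk ^ n) i j ≤ ∑ j : {x // x ∉ C}, (P ^ n) i.1 j.1 :=
      Finset.sum_le_sum fun j _ => hQle n i j
    have h2 := hsplit (fun j => (P ^ n) i.1 j)
    have h3 : (P ^ n) i.1 c0 ≤ ∑ j : {x // x ∈ C}, (P ^ n) i.1 j.1 := by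
      have := Finset.single_le_sum (f := fun j : {x // x ∈ C} => (P ^ n) i.1 j.1)
        (fun j _ => hPnpos n i.1 j.1) (Finset.mem_univ ⟨c0, hc0⟩)
      exact this
    have h4 : ∑ j, (P ^ n) i.1 j = 1 := hPnrow n i.1
    linarith
  choose g hg using hev
  set N := Finset.univ.sup g with hNdef
  have hrowsN : ∀ i, ∑ j, (Pk ^ N) i j < 1 := by
    intro i
    have hanti : Antitone (fun n => ∑ j, (Pk ^ n) i j) :=
      antitone_nat_of_succ_le fun n => mat_rowsum_succ_le Pk hQpos hQrow n i
    exact lt_of_le_of_lt (hanti (Finset.le_sup (Finset.mem_univ i))) (hg i)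
  -- norm bound
  have hnorm : ‖Pk ^ N‖ < 1 := by
    have hnn : ‖Pk ^ N‖₊ < 1 := by
      rw [Matrix.linfty_opNNNorm_def]
      refine (Finset.sup_lt_iff (by norm_num : (⊥ : NNReal) < 1)).mpr ?_
      intro i _
      rw [← NNReal.coe_lt_coe, NNReal.coe_sum, NNReal.coe_one]
      calc ∑ j, (‖(Pk ^ N) i j‖₊ : ℝ) = ∑ j, (Pk ^ N) i j := by
            refine Finset.sum_congr rfl fun j _ => ?_
            rw [coe_nnnorm, Real.norm_of_nonneg (hQnpos N i j)]
        _ < 1 := hrowsN i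
    calc ‖Pk ^ N‖ = ((‖Pk ^ N‖₊ : NNReal) : ℝ) := (coe_nnnorm _).symm
      _ < 1 := by exact_mod_cast hnn
  set U := Units.oneSub (Pk ^ N) hnorm with hU
  set G := ∑ k ∈ Finset.range N, Pk ^ k with hG
  have hGQ : G * (1 - Pk) = 1 - Pk ^ N := by
    have h := geom_sum_mul Pk N
    have h2 : G * (1 - Pk) = -(G * (Pk - 1)) := by
      rw [mul_sub, mul_sub, mul_one, neg_sub]
    rw [h2, hG, h, neg_sub]
  have hcomm : (1 - Pk) * G = G * (1 - Pk) := by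
    have hc : Pk * G = G * Pk := by
      rw [hG, Finset.mul_sum, Finset.sum_mul]
      exact Finset.sum_congr rfl fun k _ => ((Commute.refl Pk).pow_right k).eq
    rw [sub_mul, mul_sub, one_mul, mul_one, hc]
  have hQG : (1 - Pk) * G = 1 - Pk ^ N := by rw [hcomm, hGQ]
  set B := G * (↑U⁻¹ : Matrix {x // x ∉ C} {x // x ∉ C} ℝ) with hB
  have hB1 : (1 - Pk) * B = 1 := by
    rw [hB, ← mul_assoc, hQG]
    have := U.mul_inv
    rwa [hU, Units.val_oneSub] at this
  have hcommU : Commute (1 - Pk) (↑U⁻¹ : Matrix {x // x ∉ C} {x // x ∉ C} ℝ) := by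
    have h1 : Commute (1 - Pk) (U : Matrix {x // x ∉ C} {x // x ∉ C} ℝ) := by
      rw [hU, Units.val_oneSub]
      exact Commute.sub_left (Commute.one_left _)
        ((Commute.one_right Pk).sub_right ((Commute.refl Pk).pow_right N))
    exact h1.units_inv_right
  have hB2 : B * (1 - Pk) = 1 := by
    rw [hB, mul_assoc, ← hcommU.eq, ← mul_assoc, hGQ]
    have := U.mul_inv
    rwa [hU, Units.val_oneSub] at this
  have hinv : (1 - Pk)⁻¹ = B := Matrix.inv_eq_right_inv hB1
  -- nonnegativity of B
  have hUinvpos : ∀ i j, 0 ≤ (↑U⁻¹ : Matrix {x // x ∉ C} {x // x ∉ C} ℝ) i j := by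
    intro i j
    have hsumm : Summable (fun n : ℕ => (Pk ^ N) ^ n) :=
      summable_geometric_of_norm_lt_one hnorm
    have hval : (↑U⁻¹ : Matrix {x // x ∉ C} {x // x ∉ C} ℝ) = ∑' n : ℕ, (Pk ^ N) ^ n := by rw [hU]; rfl
    let L : Matrix {x // x ∉ C} {x // x ∉ C} ℝ →ₗ[ℝ] ℝ :=
      { toFun := fun A => A i j
        map_add' := fun _ _ => rfl
        map_smul' := fun _ _ => rfl }
    have hc : Continuous L := L.continuous_of_finiteDimensional
    have hmap := ContinuousLinearMap.map_tsum ⟨L, hc⟩ hsumm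
    rw [hval]
    have heq : (∑' n : ℕ, (Pk ^ N) ^ n) i j = ∑' n : ℕ, ((Pk ^ N) ^ n) i j := hmap
    rw [heq]
    exact tsum_nonneg fun n => mat_pow_nonneg _ (hQnpos N) n i j
  have hGpos : ∀ i j, 0 ≤ G i j := by
    intro i j
    rw [hG, Matrix.sum_apply]
    exact Finset.sum_nonneg fun k _ => hQnpos k i j
  have hBpos : ∀ i j, 0 ≤ B i j := by
    intro i j
    rw [hB, Matrix.mul_apply]
    exact Finset.sum_nonneg fun k _ => mul_nonneg (hGpos i k) (hUinvpos k j)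
  -- row sums of B
  have hBrow : ∀ i, (∑ j, B i j) - (∑ j, (B * Pk) i j) = 1 := by
    intro i
    have h1 : B - B * Pk = (1 : Matrix {x // x ∉ C} {x // x ∉ C} ℝ) := by rw [← hB2, mul_sub, mul_one]
    have h2 : ∑ j, (B - B * Pk) i j = ∑ j, (1 : Matrix {x // x ∉ C} {x // x ∉ C} ℝ) i j := by
      rw [h1]
    simp only [Matrix.sub_apply, Finset.sum_sub_distrib, Matrix.one_apply] at h2
    simpa using h2
  have hMrow : ∀ i : {x // x ∉ C}, ∑ j : {x // x ∈ C}, (B * Psk) i j = 1 := by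
    intro i
    calc ∑ j : {x // x ∈ C}, (B * Psk) i j
        = ∑ j : {x // x ∈ C}, ∑ k, B i k * Psk k j := by
          simp only [Matrix.mul_apply]
      _ = ∑ k, ∑ j : {x // x ∈ C}, B i k * Psk k j := Finset.sum_comm
      _ = ∑ k, B i k * ∑ j : {x // x ∈ C}, Psk k j := by simp [Finset.mul_sum]
      _ = ∑ k, B i k * (1 - ∑ j, Pk k j) := by
          refine Finset.sum_congr rfl fun k _ => ?_
          congr 1
          have h1 := hsplit (fun j => P k.1 j)
          have h2 : ∑ j : {x // x ∈ C}, Psk k j = ∑ j : {x // x ∈ C}, P k.1 j.1 := rfl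
          have h3 : ∑ j : {x // x ∉ C}, Pk k j = ∑ j : {x // x ∉ C}, P k.1 j.1 := rfl
          have h4 : ∑ j, P k.1 j = 1 := hrow k.1
          rw [h2, h3]
          linarith
      _ = (∑ k, B i k) - ∑ k, B i k * ∑ j, Pk k j := by
          simp only [mul_sub, mul_one]
          rw [Finset.sum_sub_distrib]
      _ = (∑ k, B i k) - ∑ j, (B * Pk) i j := by
          congr 1
          calc ∑ k, B i k * ∑ j, Pk k j = ∑ k, ∑ j, B i k * Pk k j := by
                simp [Finset.mul_sum]
            _ = ∑ j, ∑ k, B i k * Pk k j := Finset.sum_comm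
            _ = ∑ j, (B * Pk) i j := by simp only [Matrix.mul_apply]
      _ = 1 := hBrow i
  -- the perturbation matrix
  have hXentry : ∀ i j : {x // x ∈ C}, Skk i j - Pkk i j = (Pks * (B * Psk)) i j := by
    intro i j
    show (Pkk + Pks * (1 - Pk)⁻¹ * Psk) i j - Pkk i j = _
    rw [Matrix.add_apply, add_sub_cancel_left, hinv, Matrix.mul_assoc]
  have hXpos : ∀ i j, 0 ≤ (Pks * (B * Psk)) i j := by
    intro i j
    rw [Matrix.mul_apply]
    refine Finset.sum_nonneg fun k _ => mul_nonneg (hpos _ _) ?_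
    rw [Matrix.mul_apply]
    exact Finset.sum_nonneg fun l _ => mul_nonneg (hBpos _ _) (hpos _ _)
  have hrows : ∀ i : {x // x ∈ C},
      ∑ j : {x // x ∈ C}, |Skk i j - Pkk i j| = ∑ j : {x // x ∉ C}, |Pks i j| := by
    intro i
    have h1 : ∑ j : {x // x ∈ C}, |Skk i j - Pkk i j|
        = ∑ j : {x // x ∈ C}, (Pks * (B * Psk)) i j := by
      refine Finset.sum_congr rfl fun j _ => ?_
      rw [hXentry i j, abs_of_nonneg (hXpos i j)]
    have h2 : ∑ j : {x // x ∈ C}, (Pks * (B * Psk)) i j = ∑ k, Pks i k := by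
      calc ∑ j : {x // x ∈ C}, (Pks * (B * Psk)) i j
          = ∑ j : {x // x ∈ C}, ∑ k, Pks i k * (B * Psk) k j := by
            simp only [Matrix.mul_apply]
        _ = ∑ k, ∑ j : {x // x ∈ C}, Pks i k * (B * Psk) k j := Finset.sum_comm
        _ = ∑ k, Pks i k * ∑ j : {x // x ∈ C}, (B * Psk) k j := by simp [Finset.mul_sum]
        _ = ∑ k, Pks i k := by
            refine Finset.sum_congr rfl fun k _ => ?_
            rw [hMrow k, mul_one]
    have h3 : ∑ k : {x // x ∉ C}, |Pks i k| = ∑ k, Pks i k :=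
      Finset.sum_congr rfl fun k _ => abs_of_nonneg (hpos _ _)
    rw [h1, h2, ← h3]
  refine ⟨iSup_congr hrows, ?_⟩
  intro δ hδ
  refine ciSup_le fun i => ?_
  rw [hrows i]
  exact hδ i
end
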